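/- No automorphism of order 4 of the Heawood graph setwise fixes a 12-cycle. -/

import Mathlib

/-!
Enumerate the 12-cycle as `l : ZMod 12 → ZMod 14`. An automorphism `α` preserving it acts on it
as a rotation `i ↦ i + c` or a reflection `i ↦ c - i`, and permutes the two vertices `u`, `z`
off the cycle. A reflection, or a rotation with `2c = 0`, would make `α²` trivial, so `α` is the
rotation by `3` or `9`, and replacing `α` by `α⁻¹` we may take `c = 3`. If `α` fixes `u`, the
cycle neighbours of `u` are closed under `+ 3`, giving `u` four neighbours. Otherwise `α` swaps
`u` and `z`, so `α²` fixes `u` and rotates by `6`; degree 3 then forces `u ~ z`, with `u`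
adjacent to `l 0`, `l 6` and `z` to `l 3`, `l 9`. Bipartiteness and girth 6 send the remaining
chord at `l 1` to `l 8`, and together with its image `l 7 ~ l 2` under `α²` it closes a 4-cycle.
-/

/-- The Heawood graph `C₁₄` on vertex set `ZMod 14`: distinct vertices `i` and `j` are
adjacent iff `j = i ± 1`, or `i` is even and `j = i + 5`, or `i` is odd and `j = i - 5`
(LCF notation `[5, -5]⁷`). -/
def heawood : SimpleGraph (ZMod 14) where
  Adj i j := i ≠ j ∧ (j = i + 1 ∨ j = i - 1 ∨
    (i.val % 2 = 0 ∧ j = i + 5) ∨ (i.val % 2 = 1 ∧ j = i - 5))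
  symm := by constructor; intro i j h; revert i j; decide
  loopless := by constructor; intro i h; revert i h; decide

/-- The set of `n`-cycles of a graph `G`, each cycle recorded as its edge set (so that
cycles are counted as subgraphs, i.e. up to choice of starting vertex and direction). -/
def cycleEdgeSets {V : Type*} [DecidableEq V] (G : SimpleGraph V) (n : ℕ) :
    Set (Finset (Sym2 V)) :=
  {s | ∃ (v : V) (w : G.Walk v v), w.IsCycle ∧ w.length = n ∧ w.edges.toFinset = s}

open Function Finset

@[elab_as_elim]
theorem ZMod.induction_add_one {n : ℕ} [NeZero n] {motive : ZMod n → Prop} (zero : motive 0)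
    (add_one : ∀ i, motive i → motive (i + 1)) (i : ZMod n) : motive i := by
  rw [← ZMod.natCast_zmod_val i]
  induction i.val with
  | zero => simpa using zero
  | succ k ih => simpa using add_one _ ih

theorem ZMod.exists_eq_add_or_eq_sub_of_injective {n : ℕ} [NeZero n] {σ : ZMod n → ZMod n}
    (hσ : Injective σ) (hstep : ∀ i, σ (i + 1) = σ i + 1 ∨ σ (i + 1) = σ i - 1) :
    ∃ c, (∀ i, σ i = i + c) ∨ ∀ i, σ i = c - i := by
  -- a step back right after a step forward would revisit a value, unless `2 = 0`
  have hpersist : ∀ i, σ (i + 1 + 1) - σ (i + 1) = σ (i + 1) - σ i := by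
    intro i
    rcases hstep i with h | h <;> rcases hstep (i + 1) with h' | h'
    · linear_combination h' - h
    · have hback : i + 1 + 1 = i := hσ (by rw [h', h]; ring)
      linear_combination h' - h - hback
    · have hback : i + 1 + 1 = i := hσ (by rw [h', h]; ring)
      linear_combination h' - h + hback
    · linear_combination h' - h
  have hlin : ∀ i, σ i = σ 0 + (σ 1 - σ 0) * i := by
    have hconst : ∀ i, σ (i + 1) - σ i = σ 1 - σ 0 := by
      intro i
      induction i using ZMod.induction_add_one with
      | zero => simp
      | add_one i ih => rw [hpersist, ih]
    intro i
    induction i using ZMod.induction_add_one with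
    | zero => simp
    | add_one i ih => linear_combination ih + hconst i
  refine ⟨σ 0, ?_⟩
  rcases hstep 0 with h | h <;> rw [zero_add] at h
  · exact Or.inl fun i => by rw [hlin i, h]; ring
  · exact Or.inr fun i => by rw [hlin i, h]; ring

theorem Function.Injective.exists_compl_range_eq_pair {α β : Type*} [Fintype α] [Fintype β]
    {l : α → β} (hl : Injective l) (hcard : Fintype.card β = Fintype.card α + 2) :
    ∃ u z, u ≠ z ∧ ∀ x, x ∉ Set.range l ↔ x = u ∨ x = z := by
  classical
  have h2 : #(univ.image l)ᶜ = 2 := by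
    rw [card_compl, card_image_of_injective _ hl, card_univ]
    omega
  obtain ⟨u, z, huz, hcompl⟩ := card_eq_two.mp h2
  refine ⟨u, z, huz, fun x => ?_⟩
  simpa using Finset.ext_iff.mp hcompl x

theorem Function.Injective.apply_notMem_range {α β : Type*} {f : β → β} (hf : Injective f)
    {l : α → β} (hsurj : ∀ j, ∃ i, f (l i) = l j) {x : β} (hx : x ∉ Set.range l) :
    f x ∉ Set.range l := by
  rintro ⟨j, hj⟩
  obtain ⟨i, hi⟩ := hsurj j
  exact hx ⟨i, hf (hi.trans hj)⟩

theorem Function.Injective.apply_apply_eq_of_mapsTo_pair {β : Type*} {f : β → β}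
    (hf : Injective f) {u z : β} (hu : f u = u ∨ f u = z) (hz : f z = u ∨ f z = z) :
    f (f u) = u := by
  rcases hu with hu | hu
  · rw [hu, hu]
  rcases hz with hz | hz
  · rw [hu, hz]
  obtain rfl := hf (hu.trans hz.symm)
  rw [hu, hu]

theorem Function.Injective.involutive_of_apply_apply_eq_on_range {α β : Type*} [Fintype α]
    [Fintype β] {f : β → β} (hf : Injective f) {l : α → β} (hl : Injective l)
    (hcard : Fintype.card β = Fintype.card α + 2) (hmaps : ∀ i, ∃ j, f (l i) = l j)
    (hsq : ∀ i, f (f (l i)) = l i) : Involutive f := by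
  obtain ⟨u, z, -, hcompl⟩ := hl.exists_compl_range_eq_pair hcard
  have hsurj : ∀ j, ∃ i, f (l i) = l j := fun j => by
    obtain ⟨i, hi⟩ := hmaps j
    exact ⟨i, by rw [← hi, hsq]⟩
  have hoff : ∀ x, x = u ∨ x = z → f x = u ∨ f x = z := fun x hx =>
    (hcompl _).1 (hf.apply_notMem_range hsurj ((hcompl x).2 hx))
  have hu := hoff u (Or.inl rfl)
  have hz := hoff z (Or.inr rfl)
  intro x
  by_cases hx : x ∈ Set.range l
  · obtain ⟨i, rfl⟩ := hx
    exact hsq i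
  rcases (hcompl x).1 hx with rfl | rfl
  · exact hf.apply_apply_eq_of_mapsTo_pair hu hz
  · exact hf.apply_apply_eq_of_mapsTo_pair hz.symm hu.symm

theorem Function.Injective.exists_rotation_or_reflection {V : Type*} [DecidableEq V] {n : ℕ}
    [NeZero n] {l : ZMod n → V} (hl : Injective l) {f : V → V} (hf : Injective f)
    (hmaps : (univ.image fun i => s(l i, l (i + 1))).image (Sym2.map f) ⊆
      univ.image fun i => s(l i, l (i + 1))) :
    ∃ c, (∀ i, f (l i) = l (i + c)) ∨ ∀ i, f (l i) = l (c - i) := by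
  have hedge : ∀ i, ∃ j, s(f (l i), f (l (i + 1))) = s(l j, l (j + 1)) := fun i => by
    obtain ⟨j, -, hj⟩ :=
      mem_image.mp (hmaps (mem_image_of_mem _ (mem_image_of_mem _ (mem_univ i))))
    exact ⟨j, by rw [hj, Sym2.map_mk]⟩
  have hrange : ∀ i, ∃ j, f (l i) = l j := fun i => by
    obtain ⟨j, hj⟩ := hedge i
    rcases Sym2.eq_iff.mp hj with ⟨h, -⟩ | ⟨h, -⟩
    exacts [⟨j, h⟩, ⟨j + 1, h⟩]
  choose σ hσ using hrange
  have hσinj : Injective σ := fun i j hij => hf.comp hl <| by simp only [comp_apply, hσ, hij]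
  have hstep : ∀ i, σ (i + 1) = σ i + 1 ∨ σ (i + 1) = σ i - 1 := fun i => by
    obtain ⟨j, hj⟩ := hedge i
    simp only [hσ] at hj
    rcases Sym2.eq_iff.mp hj with ⟨h, h'⟩ | ⟨h, h'⟩
    · exact Or.inl (by rw [hl h, hl h'])
    · exact Or.inr (by rw [hl h, hl h', add_sub_cancel_right])
  obtain ⟨c, hc | hc⟩ := ZMod.exists_eq_add_or_eq_sub_of_injective hσinj hstep
  exacts [⟨c, Or.inl fun i => by rw [hσ, hc]⟩, ⟨c, Or.inr fun i => by rw [hσ, hc]⟩]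

theorem RelIso.exists_rotation_three_or_nine_of_orderOf_eq_four {V : Type*} [Fintype V]
    {r : V → V → Prop} (α : r ≃r r) (hα : orderOf α = 4) {l : ZMod 12 → V}
    (hl : Injective l) (hcard : Fintype.card V = 14)
    (hc : ∃ c, (∀ i, α (l i) = l (i + c)) ∨ ∀ i, α (l i) = l (c - i)) :
    ∃ c, (c = 3 ∨ c = 9) ∧ ∀ i, α (l i) = l (i + c) := by
  obtain ⟨c, hc⟩ := hc
  have hrange : ∀ i, ∃ j, α (l i) = l j := by
    rcases hc with hrot | hrefl
    exacts [fun i => ⟨_, hrot i⟩, fun i => ⟨_, hrefl i⟩]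
  have hsq : ¬ ∀ i, α (α (l i)) = l i := fun h => by
    have hinv := α.injective.involutive_of_apply_apply_eq_on_range hl (by simp [hcard]) hrange h
    have h2 : α ^ 2 = 1 := RelIso.ext fun x => by rw [pow_two, RelIso.mul_apply, hinv]; rfl
    have := orderOf_dvd_of_pow_eq_one h2
    rw [hα] at this
    norm_num at this
  rcases hc with hrot | hrefl
  · have h4 : c + c + c + c = 0 := by
      have h := congrArg (· (l 0)) (pow_orderOf_eq_one α)
      simp only [hα, pow_succ, pow_zero, one_mul, RelIso.mul_apply, hrot] at h
      have h0 := hl h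
      grind
    have h2 : c + c ≠ 0 := fun h2 => hsq fun i => by rw [hrot, hrot, add_assoc, h2, add_zero]
    have hc39 : ∀ c : ZMod 12, c + c + c + c = 0 → c + c ≠ 0 → c = 3 ∨ c = 9 := by decide
    exact ⟨c, hc39 c h4 h2, hrot⟩
  · exact absurd (fun i => by rw [hrefl, hrefl, sub_sub_cancel]) hsq

namespace SimpleGraph

variable {V : Type*} {G : SimpleGraph V}

structure IsCycleEnumeration {n : ℕ} (G : SimpleGraph V) (l : ZMod n → V) : Prop where
  injective : Injective l
  adj : ∀ i, G.Adj (l i) (l (i + 1))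

theorem Walk.IsCycle.exists_isCycleEnumeration [DecidableEq V] {n : ℕ} [NeZero n] {v : V}
    {w : G.Walk v v} (hw : w.IsCycle) (hn : w.length = n) :
    ∃ l : ZMod n → V, G.IsCycleEnumeration l ∧
      w.edges.toFinset = univ.image fun i => s(l i, l (i + 1)) := by
  have hsucc : ∀ i : ZMod n, w.getVert (i + 1).val = w.getVert (i.val + 1) := by
    intro i
    have hval : (i + 1).val = (i.val + 1) % n := by
      rw [ZMod.val_add, ZMod.val_one_eq_one_mod, Nat.add_mod_mod]
    rcases (show i.val + 1 ≤ n from i.val_lt).lt_or_eq with h | h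
    · rw [hval, Nat.mod_eq_of_lt h]
    · rw [hval, h, Nat.mod_self, Walk.getVert_zero, ← hn, Walk.getVert_length]
  refine ⟨fun i => w.getVert i.val, ⟨fun i j hij => ?_, fun i => ?_⟩, ?_⟩
  · have hi := i.val_lt
    have hj := j.val_lt
    exact ZMod.val_injective _ <| hw.getVert_injOn' (by simp only [Set.mem_ofPred_eq]; omega)
      (by simp only [Set.mem_ofPred_eq]; omega) hij
  · simp only [hsucc]
    exact w.adj_getVert_succ (hn ▸ i.val_lt)
  · ext e
    simp only [List.mem_toFinset, mem_image, mem_univ, true_and, hsucc]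
    constructor
    · intro he
      obtain ⟨k, hk, rfl⟩ := List.mem_iff_getElem.mp he
      rw [Walk.length_edges] at hk
      refine ⟨k, ?_⟩
      rw [Walk.getElem_edges, ZMod.val_natCast_of_lt (hn ▸ hk)]
    · rintro ⟨i, rfl⟩
      exact (Walk.mk_mem_edges_iff_exists w).mpr ⟨i.val, hn ▸ i.val_lt, rfl⟩

theorem IsCycleEnumeration.adj_of_eq {n : ℕ} {l : ZMod n → V} (hl : G.IsCycleEnumeration l)
    {i j : ZMod n} (h : j = i + 1) : G.Adj (l i) (l j) :=
  h ▸ hl.adj i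

theorem IsCycleEnumeration.comp_add_left {n : ℕ} {l : ZMod n → V}
    (hl : G.IsCycleEnumeration l) (a : ZMod n) : G.IsCycleEnumeration fun i => l (a + i) :=
  ⟨hl.injective.comp (add_right_injective a), fun i => by
    simpa [add_assoc] using hl.adj (a + i)⟩

section Cubic

variable [DecidableEq V] [G.LocallyFinite]

theorem eq_or_eq_or_eq_of_degree_le_three {x a b c d : V} (hx : G.degree x ≤ 3)
    (ha : G.Adj x a) (hb : G.Adj x b) (hc : G.Adj x c) (hd : G.Adj x d)
    (hab : a ≠ b) (hac : a ≠ c) (hbc : b ≠ c) : d = a ∨ d = b ∨ d = c := by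
  by_contra! hd'
  have hsub : {a, b, c, d} ⊆ G.neighborFinset x := by
    simp [insert_subset_iff, ha, hb, hc, hd]
  have hcard := card_le_card hsub
  rw [card_neighborFinset_eq_degree, card_insert_of_notMem (by simp [hab, hac, hd'.1.symm]),
    card_insert_of_notMem (by simp [hbc, hd'.2.1.symm]),
    card_insert_of_notMem (by simp [hd'.2.2.symm]), card_singleton] at hcard
  omega

theorem exists_adj_ne_ne_of_three_le_degree {x : V} (hx : 3 ≤ G.degree x) (p q : V) :
    ∃ y, G.Adj x y ∧ y ≠ p ∧ y ≠ q := by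
  have h1 := pred_card_le_card_erase (s := G.neighborFinset x) (a := p)
  have h2 := pred_card_le_card_erase (s := (G.neighborFinset x).erase p) (a := q)
  rw [card_neighborFinset_eq_degree] at h1
  obtain ⟨y, hy⟩ := card_pos.mp (show 0 < #(((G.neighborFinset x).erase p).erase q) by omega)
  simp only [mem_erase, mem_neighborFinset] at hy
  exact ⟨y, hy.2.2, hy.2.1, hy.1⟩

end Cubic

theorem IsCycleEnumeration.castHom_sub_eq_one {n : ℕ} [NeZero n] (hn : 2 ∣ n)
    {l : ZMod n → V} (hl : G.IsCycleEnumeration l) (C : G.Coloring (ZMod 2)) {a b : ZMod n}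
    (hab : G.Adj (l a) (l b)) : ZMod.castHom hn (ZMod 2) (b - a) = 1 := by
  have hflip : ∀ x y : ZMod 2, x ≠ y → y - x = 1 := by decide
  have hC : ∀ i, C (l i) = C (l 0) + ZMod.castHom hn (ZMod 2) i := by
    intro i
    induction i using ZMod.induction_add_one with
    | zero => simp
    | add_one i ih =>
      rw [map_add, map_one, ← add_assoc, ← ih, ← hflip _ _ (C.valid (hl.adj i))]
      ring
  rw [map_sub, ← hflip _ _ (C.valid hab), hC a, hC b]
  ring

end SimpleGraph

open SimpleGraph

instance : DecidableRel heawood.Adj := fun i j => by dsimp [heawood]; infer_instance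

theorem heawood_degree (x : ZMod 14) : heawood.degree x = 3 := by
  revert x
  decide

def heawoodColoring : heawood.Coloring (ZMod 2) :=
  Coloring.mk (ZMod.castHom (by norm_num : 2 ∣ 14) (ZMod 2)) (by decide)

theorem heawood_eq_or_eq_of_square : ∀ a b c d : ZMod 14, heawood.Adj a b → heawood.Adj b c →
    heawood.Adj c d → heawood.Adj d a → a = c ∨ b = d := by
  decide

section TwelveCycle

variable {l : ZMod 12 → ZMod 14}

theorem heawood_not_adj_add_three (hl : heawood.IsCycleEnumeration l) (a : ZMod 12) :
    ¬ heawood.Adj (l a) (l (a + 3)) := by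
  intro h
  rcases heawood_eq_or_eq_of_square _ _ _ _ (hl.adj a) (hl.adj (a + 1))
    (hl.adj_of_eq (by ring)) h.symm with h' | h'
  · exact absurd (hl.injective h') (by grind)
  · exact absurd (hl.injective h') (by grind)

theorem heawood_eq_add_five_or_eq_add_seven_of_adj (hl : heawood.IsCycleEnumeration l)
    {a b : ZMod 12} (hab : heawood.Adj (l a) (l b)) (hnext : l b ≠ l (a + 1))
    (hprev : l b ≠ l (a - 1)) :
    b = a + 5 ∨ b = a + 7 := by
  -- the offset `b - a` is odd by bipartiteness and not `± 3` by girth 6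
  have hodd := hl.castHom_sub_eq_one (by norm_num) heawoodColoring hab
  have h3 : b ≠ a + 3 := by
    rintro rfl
    exact heawood_not_adj_add_three hl a hab
  have h9 : a ≠ b + 3 := by
    rintro rfl
    exact heawood_not_adj_add_three hl b hab.symm
  obtain ⟨d, rfl⟩ : ∃ d, b = a + d := ⟨b - a, by ring⟩
  rw [add_sub_cancel_left] at hodd
  have hd : ∀ d : ZMod 12, ZMod.castHom (by norm_num : 2 ∣ 12) (ZMod 2) d = 1 →
      d ≠ 1 → d ≠ -1 → d ≠ 3 → d ≠ -3 → d = 5 ∨ d = 7 := by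
    decide
  simpa using hd d hodd (by grind) (by grind) (by grind) (by grind)

theorem heawood_eq_add_one_or_eq_sub_one_of_adj (hl : heawood.IsCycleEnumeration l)
    {w : ZMod 14} (hw : w ∉ Set.range l) {k j : ZMod 12} (hwk : heawood.Adj w (l k))
    (hkj : heawood.Adj (l k) (l j)) : j = k + 1 ∨ j = k - 1 := by
  have hne : ∀ i, l i ≠ w := fun i h => hw ⟨i, h⟩
  rcases eq_or_eq_or_eq_of_degree_le_three (heawood_degree _).le (hl.adj k)
      (hl.adj_of_eq (sub_add_cancel k 1).symm).symm hwk.symm hkj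
      (hl.injective.ne (by grind)) (hne _) (hne _) with h | h | h
  · exact Or.inl (hl.injective h)
  · exact Or.inr (hl.injective h)
  · exact absurd h (hne j)

theorem heawood_not_adj_of_rotation_six (hl : heawood.IsCycleEnumeration l) {u z : ZMod 14}
    (hcompl : ∀ x, x ∉ Set.range l ↔ x = u ∨ x = z) (β : heawood ≃g heawood)
    (hβ : ∀ i, β (l i) = l (i + 6)) (hu0 : heawood.Adj u (l 0)) (hu6 : heawood.Adj u (l 6))
    (hz3 : heawood.Adj z (l 3)) (hz9 : heawood.Adj z (l 9)) : ¬ heawood.Adj u z := by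
  intro huz
  have hu : u ∉ Set.range l := (hcompl u).2 (Or.inl rfl)
  have hz : z ∉ Set.range l := (hcompl z).2 (Or.inr rfl)
  obtain ⟨y, hy, hy0, hy2⟩ :=
    exists_adj_ne_ne_of_three_le_degree (heawood_degree (l 1)).ge (l 0) (l 2)
  have hyu : y ≠ u := by
    rintro rfl
    rcases eq_or_eq_or_eq_of_degree_le_three (heawood_degree _).le hu0 hu6 huz hy.symm
      (hl.injective.ne (by decide)) (fun h => hz ⟨0, h⟩) (fun h => hz ⟨6, h⟩) with h | h | h
    · exact absurd (hl.injective h) (by decide)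
    · exact absurd (hl.injective h) (by decide)
    · exact hz ⟨1, h⟩
  have hyz : y ≠ z := by
    rintro rfl
    rcases eq_or_eq_or_eq_of_degree_le_three (heawood_degree _).le hz3 hz9 huz.symm hy.symm
      (hl.injective.ne (by decide)) (fun h => hu ⟨3, h⟩) (fun h => hu ⟨9, h⟩) with h | h | h
    · exact absurd (hl.injective h) (by decide)
    · exact absurd (hl.injective h) (by decide)
    · exact hu ⟨1, h⟩
  obtain ⟨k, rfl⟩ : y ∈ Set.range l := by
    by_contra h
    rcases (hcompl y).1 h with rfl | rfl <;> contradiction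
  rcases heawood_eq_add_five_or_eq_add_seven_of_adj hl hy hy2 hy0 with rfl | rfl
  · rcases heawood_eq_add_one_or_eq_sub_one_of_adj hl hu hu6 hy.symm with h | h <;>
      exact absurd h (by decide)
  · have h27 : heawood.Adj (l 2) (l 7) := by
      have := β.map_adj_iff.mpr hy
      rw [hβ, hβ] at this
      exact this.symm
    rcases heawood_eq_or_eq_of_square _ _ _ _ (hl.adj 1) h27 (hl.adj 7) hy.symm with h | h <;>
      exact absurd (hl.injective h) (by decide)

theorem heawood_not_rotation_three_of_adj (hl : heawood.IsCycleEnumeration l) {u z : ZMod 14}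
    (huz : u ≠ z) (hcompl : ∀ x, x ∉ Set.range l ↔ x = u ∨ x = z)
    (α : heawood ≃g heawood) (hu0 : heawood.Adj u (l 0)) : ¬ ∀ i, α (l i) = l (i + 3) := by
  intro hα
  have hoff : ∀ x, x = u ∨ x = z → α x = u ∨ α x = z := fun x hx =>
    (hcompl _).1 <| α.injective.apply_notMem_range
      (fun j => ⟨j - 3, by rw [hα, sub_add_cancel]⟩) ((hcompl x).2 hx)
  have hmap : ∀ {x y}, heawood.Adj x y → heawood.Adj (α x) (α y) := α.map_adj_iff.mpr
  rcases hoff u (Or.inl rfl) with hfix | hswap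
  · have hstep : ∀ i, heawood.Adj u (l i) → heawood.Adj u (l (i + 3)) := fun i h => by
      simpa only [hfix, hα] using hmap h
    have hu3 := hstep 0 hu0
    have hu6 := hstep 3 hu3
    have hu9 := hstep 6 hu6
    rcases eq_or_eq_or_eq_of_degree_le_three (heawood_degree u).le hu0 hu3 hu6 hu9
      (hl.injective.ne (by decide)) (hl.injective.ne (by decide))
      (hl.injective.ne (by decide)) with h | h | h <;>
      exact absurd (hl.injective h) (by decide)
  have hback : α z = u :=
    (hoff z (Or.inr rfl)).resolve_right fun h => huz (α.injective (hswap.trans h.symm))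
  have hβ : ∀ i, (α * α) (l i) = l (i + 6) := fun i => by
    rw [RelIso.mul_apply, hα, hα, add_assoc]
    rfl
  have hstep : ∀ i, heawood.Adj u (l i) → heawood.Adj u (l (i + 6)) := fun i h => by
    have h' := hmap (hmap h)
    rwa [hswap, hback, ← RelIso.mul_apply, hβ] at h'
  have hu6 := hstep 0 hu0
  obtain ⟨y, hy, hy0, hy6⟩ :=
    exists_adj_ne_ne_of_three_le_degree (heawood_degree u).ge (l 0) (l 6)
  -- cycle neighbours of `u` come in pairs `l i`, `l (i + 6)`, so a third one forces a fourth
  by_cases hyz : y = z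
  · subst hyz
    have hz3 := hmap hu0
    have hz9 := hmap hu6
    rw [hswap, hα] at hz3 hz9
    exact heawood_not_adj_of_rotation_six hl hcompl (α * α) hβ hu0 hu6 hz3 hz9 hy
  obtain ⟨b, rfl⟩ : y ∈ Set.range l := by
    by_contra h
    rcases (hcompl y).1 h with rfl | rfl
    · exact hy.ne rfl
    · exact hyz rfl
  rcases eq_or_eq_or_eq_of_degree_le_three (heawood_degree u).le hu0 hu6 hy (hstep b hy)
    (hl.injective.ne (by decide)) hy0.symm hy6.symm with h | h | h
  · exact hy6 (congrArg l (by grind [hl.injective h]))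
  · exact hy0 (congrArg l (by grind [hl.injective h]))
  · exact absurd (hl.injective h) (by grind)

theorem heawood_not_rotation_three (hl : heawood.IsCycleEnumeration l) (α : heawood ≃g heawood) :
    ¬ ∀ i, α (l i) = l (i + 3) := by
  intro hα
  obtain ⟨u, z, huz, hcompl⟩ := hl.injective.exists_compl_range_eq_pair (by simp)
  obtain ⟨y, hy, -, hyz⟩ := exists_adj_ne_ne_of_three_le_degree (heawood_degree u).ge z z
  obtain ⟨a, rfl⟩ : y ∈ Set.range l := by
    by_contra h
    rcases (hcompl y).1 h with rfl | rfl
    · exact hy.ne rfl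
    · exact hyz rfl
  have hrange : Set.range (fun i => l (a + i)) = Set.range l :=
    (add_left_surjective a).range_comp l
  exact heawood_not_rotation_three_of_adj (hl.comp_add_left a) huz (hrange ▸ hcompl) α
    (by rwa [add_zero]) fun i => by rw [hα, add_assoc]

theorem heawood_not_rotation_three_or_nine (hl : heawood.IsCycleEnumeration l)
    (α : heawood ≃g heawood) {c : ZMod 12} (hc : c = 3 ∨ c = 9) :
    ¬ ∀ i, α (l i) = l (i + c) := by
  rcases hc with rfl | rfl
  · exact heawood_not_rotation_three hl α
  · intro hrot
    refine heawood_not_rotation_three hl α.symm fun i => α.symm_apply_eq.mpr ?_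
    rw [hrot]
    congr 1
    grind

end TwelveCycle

/-- No automorphism of order 4 of the Heawood graph setwise fixes a 12-cycle. -/
theorem heawood_order_four_no_invariant_twelveCycle (α : heawood ≃g heawood)
    (hα : orderOf α = 4) :
    ∀ s ∈ cycleEdgeSets heawood 12, s.image (Sym2.map ⇑α) ≠ s := by
  rintro s ⟨v, w, hw, hlen, rfl⟩ hs
  obtain ⟨l, hl, hedges⟩ := hw.exists_isCycleEnumeration hlen
  rw [hedges] at hs
  obtain ⟨c, hc, hrot⟩ := α.exists_rotation_three_or_nine_of_orderOf_eq_four hα hl.injective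
    (by simp) (hl.injective.exists_rotation_or_reflection α.injective hs.subset)
  exact heawood_not_rotation_three_or_nine hl α hc hrot
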